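/- arXiv:math/0609712 — 6 statements merged into one kernel-verified Lean document; each statement's English description precedes it below -/
import Mathlib

section
/- Let L ≥ 1 and for 1 ≤ j ≤ L let δ_j = 1/2 − b(j) and \bar δ_j = 1/2 + b(j) where |b(j)| < 1/2. Define a_r = (∏_{j=1}^{r−1} \bar δ_j)(∏_{j=r+1}^{L} δ_j) and \bar a_r = (∏_{j=1}^{r−1} δ_j)(∏_{j=r+1}^{L} \bar δ_j). Then (∑_{r=1}^L a_r)(∑_{r=1}^L \bar a_r) ≥ 4 L² ∏_{k=1}^L δ_k \bar δ_k. -/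
/-!
Write `δ_j = 1/2 - b j`, `δ̄_j = 1/2 + b j`, so `δ_j + δ̄_j = 1`. The product `a_r ā_r` is
`∏_{k ≠ r} δ_k δ̄_k`, and since `δ_r δ̄_r ≤ ((δ_r + δ̄_r)/2)^2 = 1/4` it is at least
`4 ∏_k δ_k δ̄_k`. Cauchy–Schwarz, `(∑ a_r)(∑ ā_r) ≥ (∑ √(a_r ā_r))^2`, then gives the bound.
-/

open Finset

theorem Finset.card_sq_mul_le_sum_mul_sum {ι : Type*} (s : Finset ι) {f g : ι → ℝ} {c : ℝ}
    (hc : 0 ≤ c) (hf : ∀ i ∈ s, 0 ≤ f i) (hg : ∀ i ∈ s, 0 ≤ g i)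
    (hfg : ∀ i ∈ s, c ≤ f i * g i) :
    (#s : ℝ) ^ 2 * c ≤ (∑ i ∈ s, f i) * ∑ i ∈ s, g i := by
  have := sum_sq_le_sum_mul_sum_of_sq_le_mul s hf hg (r := fun _ ↦ √c)
    fun i hi ↦ (Real.sq_sqrt hc).trans_le (hfg i hi)
  rwa [sum_const, nsmul_eq_mul, mul_pow, Real.sq_sqrt hc] at this

theorem Finset.prod_Icc_one_eq_mul_mul {M : Type*} [CommMonoid M] (f : ℕ → M) {r n : ℕ}
    (hr : r ∈ Icc 1 n) :
    ∏ j ∈ Icc 1 n, f j = (∏ j ∈ Icc 1 (r - 1), f j) * f r * ∏ j ∈ Icc (r + 1) n, f j := by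
  obtain ⟨hr1, hrn⟩ := mem_Icc.mp hr
  obtain ⟨r, rfl⟩ := Nat.exists_eq_add_of_le' hr1
  simp only [← Ico_add_one_right_eq_Icc, Nat.add_sub_cancel]
  rw [← prod_Ico_consecutive _ (by omega : 1 ≤ r + 1 + 1) (by omega : r + 1 + 1 ≤ n + 1),
    prod_Ico_succ_top (by omega)]

/-- With `u = δ`, `v = δ̄` this is the paper's `a_r`; swapping `u` and `v` gives `ā_r`. -/
def splitProd (u v : ℕ → ℝ) (L r : ℕ) : ℝ :=
  (∏ j ∈ Icc 1 (r - 1), v j) * ∏ j ∈ Icc (r + 1) L, u j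

section SplitProd

variable {L : ℕ} {u v : ℕ → ℝ}

theorem splitProd_nonneg (hu : ∀ j ∈ Icc 1 L, 0 ≤ u j) (hv : ∀ j ∈ Icc 1 L, 0 ≤ v j) {r : ℕ}
    (hr : r ∈ Icc 1 L) : 0 ≤ splitProd u v L r := by
  have hr' := mem_Icc.mp hr
  refine mul_nonneg (prod_nonneg fun j hj ↦ hv j ?_) (prod_nonneg fun j hj ↦ hu j ?_)
  · exact Icc_subset_Icc le_rfl (by omega) hj
  · exact Icc_subset_Icc (by omega) le_rfl hj

theorem four_mul_prod_le_splitProd_mul (hu : ∀ j ∈ Icc 1 L, 0 ≤ u j)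
    (hv : ∀ j ∈ Icc 1 L, 0 ≤ v j) (huv : ∀ j ∈ Icc 1 L, u j + v j = 1) {r : ℕ}
    (hr : r ∈ Icc 1 L) :
    4 * ∏ k ∈ Icc 1 L, u k * v k ≤ splitProd u v L r * splitProd v u L r := by
  have hr' := mem_Icc.mp hr
  have huv_nonneg : ∀ s ⊆ Icc 1 L, 0 ≤ ∏ k ∈ s, u k * v k := fun s hs ↦
    prod_nonneg fun k hk ↦ mul_nonneg (hu k (hs hk)) (hv k (hs hk))
  have hlow := huv_nonneg (Icc 1 (r - 1)) (Icc_subset_Icc le_rfl (by omega))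
  have hhigh := huv_nonneg (Icc (r + 1) L) (Icc_subset_Icc (by omega) le_rfl)
  have hr_le : 4 * (u r * v r) ≤ 1 := by nlinarith [sq_nonneg (u r - v r), huv r hr]
  rw [prod_Icc_one_eq_mul_mul _ hr]
  calc _ = 4 * (u r * v r) *
        ((∏ k ∈ Icc 1 (r - 1), u k * v k) * ∏ k ∈ Icc (r + 1) L, u k * v k) := by ring
    _ ≤ (∏ k ∈ Icc 1 (r - 1), u k * v k) * ∏ k ∈ Icc (r + 1) L, u k * v k :=
        mul_le_of_le_one_left (mul_nonneg hlow hhigh) hr_le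
    _ = splitProd u v L r * splitProd v u L r := by
        simp only [splitProd, prod_mul_distrib]; ring

theorem four_mul_sq_mul_prod_le_sum_splitProd_mul_sum (hu : ∀ j ∈ Icc 1 L, 0 ≤ u j)
    (hv : ∀ j ∈ Icc 1 L, 0 ≤ v j) (huv : ∀ j ∈ Icc 1 L, u j + v j = 1) :
    4 * (L : ℝ) ^ 2 * ∏ k ∈ Icc 1 L, u k * v k ≤
      (∑ r ∈ Icc 1 L, splitProd u v L r) * ∑ r ∈ Icc 1 L, splitProd v u L r := by
  have hP : 0 ≤ 4 * ∏ k ∈ Icc 1 L, u k * v k :=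
    mul_nonneg zero_le_four (prod_nonneg fun k hk ↦ mul_nonneg (hu k hk) (hv k hk))
  have := card_sq_mul_le_sum_mul_sum (Icc 1 L) hP (fun r ↦ splitProd_nonneg hu hv)
    (fun r ↦ splitProd_nonneg hv hu) (fun r ↦ four_mul_prod_le_splitProd_mul hu hv huv)
  rwa [Nat.card_Icc, Nat.add_sub_cancel, ← mul_assoc, mul_comm _ (4 : ℝ)] at this

end SplitProd

theorem stmt_1_general (L : ℕ) (b : ℕ → ℝ)
    (hb : ∀ j, 1 ≤ j → j ≤ L → |b j| < 1/2) :
    (∑ r ∈ Icc 1 L, (∏ j ∈ Icc 1 (r-1), (1/2 + b j)) * (∏ j ∈ Icc (r+1) L, (1/2 - b j))) *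
      (∑ r ∈ Icc 1 L, (∏ j ∈ Icc 1 (r-1), (1/2 - b j)) * (∏ j ∈ Icc (r+1) L, (1/2 + b j)))
    ≥ 4 * (L : ℝ)^2 * ∏ k ∈ Icc 1 L, ((1/2 - b k) * (1/2 + b k)) := by
  have hb' : ∀ j ∈ Icc 1 L, -(1/2) < b j ∧ b j < 1/2 := fun j hj ↦
    abs_lt.mp (hb j (mem_Icc.mp hj).1 (mem_Icc.mp hj).2)
  exact four_mul_sq_mul_prod_le_sum_splitProd_mul_sum
    (fun j hj ↦ by linarith [hb' j hj]) (fun j hj ↦ by linarith [hb' j hj]) (fun j _ ↦ by ring)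

theorem stmt_1 (L : ℕ) (hL : 1 ≤ L) (b : ℕ → ℝ)
    (hb : ∀ j, 1 ≤ j → j ≤ L → |b j| < 1/2) :
    (∑ r ∈ Icc 1 L, (∏ j ∈ Icc 1 (r-1), (1/2 + b j)) * (∏ j ∈ Icc (r+1) L, (1/2 - b j))) *
      (∑ r ∈ Icc 1 L, (∏ j ∈ Icc 1 (r-1), (1/2 - b j)) * (∏ j ∈ Icc (r+1) L, (1/2 + b j)))
    ≥ 4 * (L : ℝ)^2 * ∏ k ∈ Icc 1 L, ((1/2 - b k) * (1/2 + b k)) :=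
  stmt_1_general L b hb
end

section
/- Let L ≥ 1, b : {0,1,...,L+1} → ℝ with b(1) = −b(0), and δ_j = 1/2 − b(j), \bar δ_j = 1/2 + b(j) all positive. Suppose φ* : {0,...,L+1} → ℝ satisfies φ*(x) − (1/2)[φ*(x+1) + φ*(x−1)] − b(x−1)φ*(x−1) + b(x+1)φ*(x+1) = 0 for 1 ≤ x ≤ L, with boundary conditions φ*(0) = φ*(1), φ*(L+1) = φ*(L). Then φ*(y) = φ*(1) ∏_{j=1}^{y−1} \bar δ_j/δ_{j+1} for 1 ≤ y ≤ L. -/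
/-!
The equation at `x` says exactly that the probability current
`J x = (1/2 - b (x+1)) φ (x+1) - (1/2 + b x) φ x` satisfies `J x = J (x-1)`;
the reflecting boundary `φ 0 = φ 1` together with `b 1 = - b 0` makes `J 0 = 0`.
Hence `J ≡ 0`, i.e. detailed balance `φ (x+1) δ_{x+1} = φ x δ̄_x`, which gives the product.
-/

open Finset

theorem prod_Ico_of_succ_eq_mul {M : Type*} [CommMonoid M] {f r : ℕ → M} {m n : ℕ}
    (hmn : m ≤ n) (hf : ∀ j, m ≤ j → j < n → f (j + 1) = f j * r j) :
    f n = f m * ∏ j ∈ Ico m n, r j := by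
  induction n, hmn using Nat.le_induction with
  | base => simp
  | succ n hmn ih =>
    rw [prod_Ico_succ_top hmn, ← mul_assoc, ← ih fun j hj hjn ↦ hf j hj (by omega),
      hf n hmn n.lt_succ_self]

namespace ReflectedWalk

variable (b φ : ℕ → ℝ)

noncomputable def current (x : ℕ) : ℝ :=
  (1/2 - b (x + 1)) * φ (x + 1) - (1/2 + b x) * φ x

theorem current_sub_current_pred {x : ℕ} (hx : 1 ≤ x) :
    current b φ x - current b φ (x - 1) =
      -(φ x - (1/2) * (φ (x+1) + φ (x-1)) - b (x-1) * φ (x-1) + b (x+1) * φ (x+1)) := by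
  obtain ⟨n, rfl⟩ := Nat.exists_eq_add_of_le' hx
  simp only [current, Nat.add_sub_cancel]
  ring

variable {b φ}

theorem current_zero (hb1 : b 1 = - b 0) (hbc0 : φ 0 = φ 1) : current b φ 0 = 0 := by
  simp only [current, hb1, hbc0]
  ring

theorem current_eq_zero {L : ℕ} (hb1 : b 1 = - b 0) (hbc0 : φ 0 = φ 1)
    (heq : ∀ x, 1 ≤ x → x ≤ L →
      φ x - (1/2) * (φ (x+1) + φ (x-1)) - b (x-1) * φ (x-1) + b (x+1) * φ (x+1) = 0) :
    ∀ x ≤ L, current b φ x = 0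
  | 0, _ => current_zero hb1 hbc0
  | n + 1, hn => by
    have hstep := current_sub_current_pred b φ (x := n + 1) (by omega)
    rw [heq (n + 1) (by omega) hn, Nat.add_sub_cancel,
      current_eq_zero hb1 hbc0 heq n (by omega)] at hstep
    linarith

theorem succ_eq_mul_of_current_eq_zero {x : ℕ} (hx : current b φ x = 0)
    (hpos : 0 < 1/2 - b (x + 1)) :
    φ (x + 1) = φ x * ((1/2 + b x) / (1/2 - b (x + 1))) := by
  rw [mul_div_assoc', eq_div_iff hpos.ne']
  simp only [current] at hx
  linarith

end ReflectedWalk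

open ReflectedWalk in
theorem stmt_2_general (L : ℕ) (b : ℕ → ℝ)
    (hb1 : b 1 = - b 0)
    (hpos : ∀ j, j ≤ L + 1 → 0 < 1/2 - b j ∧ 0 < 1/2 + b j)
    (φ : ℕ → ℝ)
    (heq : ∀ x, 1 ≤ x → x ≤ L →
      φ x - (1/2) * (φ (x+1) + φ (x-1)) - b (x-1) * φ (x-1) + b (x+1) * φ (x+1) = 0)
    (hbc0 : φ 0 = φ 1) :
    ∀ y, 1 ≤ y → y ≤ L →
      φ y = φ 1 * ∏ j ∈ Icc 1 (y-1), (1/2 + b j) / (1/2 - b (j+1)) := by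
  intro y hy hyL
  rw [← Ico_add_one_right_eq_Icc, Nat.sub_one_add_one_eq_of_pos hy]
  refine prod_Ico_of_succ_eq_mul hy fun j _ hjy ↦ ?_
  exact succ_eq_mul_of_current_eq_zero (current_eq_zero hb1 hbc0 heq j (by omega))
    (hpos (j + 1) (by omega)).1

theorem stmt_2 (L : ℕ) (hL : 1 ≤ L) (b : ℕ → ℝ)
    (hb1 : b 1 = - b 0)
    (hpos : ∀ j, j ≤ L + 1 → 0 < 1/2 - b j ∧ 0 < 1/2 + b j)
    (φ : ℕ → ℝ)
    (heq : ∀ x, 1 ≤ x → x ≤ L →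
      φ x - (1/2) * (φ (x+1) + φ (x-1)) - b (x-1) * φ (x-1) + b (x+1) * φ (x+1) = 0)
    (hbc0 : φ 0 = φ 1) (hbcL : φ (L+1) = φ L) :
    ∀ y, 1 ≤ y → y ≤ L →
      φ y = φ 1 * ∏ j ∈ Icc 1 (y-1), (1/2 + b j) / (1/2 - b (j+1)) :=
  stmt_2_general L b hb1 hpos φ heq hbc0
end

section
/- Let L ≥ 1 and b : {1,...,L} → ℝ with |b(x)| < 1/2; set δ_x = 1/2 − b(x), \bar δ_x = 1/2 + b(x). Suppose ψ₀ : {0,...,L+1} → ℝ satisfies ψ₀(x) − (1/2)[ψ₀(x+1) + ψ₀(x−1)] − b(x)[ψ₀(x+1) − ψ₀(x−1)] = 0 for 1 ≤ x ≤ L, with boundary conditions ψ₀(0) = −ψ₀(1) and ψ₀(L+1) = 1 − ψ₀(L). Then 2ψ₀(1) = ∏_{k=1}^L \bar δ_k / ∑_{r=1}^L (∏_{j=1}^{r−1} δ_j)(∏_{j=r+1}^L \bar δ_j). -/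
/-!
As δ_x + \bar δ_x = 1, the equation at x says both \bar δ_x Dψ(x+1) = δ_x Dψ(x) and
\bar δ_x (ψ(x+1) − ψ(x−1)) = Dψ(x). Iterating the first from Dψ(1) = 2ψ(1) gives
(∏_{j=1}^{x} \bar δ_j) Dψ(x+1) = 2ψ(1) ∏_{j=1}^{x} δ_j, so with the second,
(∏_{k=1}^L \bar δ_k)(ψ(r+1) − ψ(r−1)) is 2ψ(1) times the r-th term of the denominator.
Summing over r, the left side telescopes to ∏ \bar δ_k · [(ψ(L+1) + ψ(L)) − (ψ(1) + ψ(0))] = ∏ \bar δ_k,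
which is nonzero because |b| < 1/2.
-/

open Finset

theorem prod_Icc_mul_eq_of_mul_eq_mul_pred {M : Type*} [CommMonoid M] (p q d : ℕ → M) (n : ℕ)
    (h : ∀ x, 1 ≤ x → x ≤ n → p x * d x = q x * d (x - 1)) :
    ∀ x ≤ n, (∏ j ∈ Icc 1 x, p j) * d x = (∏ j ∈ Icc 1 x, q j) * d 0 := by
  intro x
  induction x with
  | zero => simp
  | succ y ih =>
    intro hy
    rw [prod_Icc_succ_top (by omega), prod_Icc_succ_top (by omega), mul_assoc,
      h (y + 1) (by omega) hy, Nat.add_sub_cancel, mul_left_comm, ih (by omega), mul_left_comm,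
      ← mul_assoc]

theorem sum_Icc_one_succ_sub_pred {G : Type*} [AddCommGroup G] (f : ℕ → G) (n : ℕ) :
    ∑ x ∈ Icc 1 n, (f (x + 1) - f (x - 1)) = f (n + 1) + f n - f 1 - f 0 := by
  induction n with
  | zero => simp
  | succ m ih =>
    rw [sum_Icc_succ_top (by omega), ih, Nat.add_sub_cancel]
    abel

theorem prod_Icc_one_eq_mul_prod_Icc {M : Type*} [CommMonoid M] (f : ℕ → M) {x n : ℕ}
    (hx : x ≤ n) : ∏ j ∈ Icc 1 n, f j = (∏ j ∈ Icc 1 x, f j) * ∏ j ∈ Icc (x + 1) n, f j := by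
  simpa only [← Icc_add_one_left_eq_Ioc, zero_add] using
    (prod_Ioc_consecutive f (Nat.zero_le x) hx).symm

section RandomWalk

variable (b ψ : ℕ → ℝ) (L : ℕ)
  (heq : ∀ x, 1 ≤ x → x ≤ L →
    ψ x - (1/2) * (ψ (x+1) + ψ (x-1)) - b x * (ψ (x+1) - ψ (x-1)) = 0)
include heq

theorem prod_Icc_mul_succ_sub_eq (x : ℕ) (hx : x ≤ L) :
    (∏ j ∈ Icc 1 x, (1/2 + b j)) * (ψ (x + 1) - ψ x)
      = (∏ j ∈ Icc 1 x, (1/2 - b j)) * (ψ 1 - ψ 0) :=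
  prod_Icc_mul_eq_of_mul_eq_mul_pred _ _ (fun x => ψ (x + 1) - ψ x) L
    (fun x h1 h2 => by
      have := heq x h1 h2
      rw [Nat.sub_add_cancel h1]
      linear_combination -this) x hx

theorem prod_Icc_mul_succ_sub_pred_eq (r : ℕ) (hr : r ∈ Icc 1 L) :
    (∏ k ∈ Icc 1 L, (1/2 + b k)) * (ψ (r + 1) - ψ (r - 1))
      = (ψ 1 - ψ 0) * ((∏ j ∈ Icc 1 (r - 1), (1/2 - b j)) * ∏ j ∈ Icc (r + 1) L, (1/2 + b j)) := by
  obtain ⟨h1, h2⟩ := mem_Icc.mp hr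
  obtain ⟨y, rfl⟩ : ∃ y, r = y + 1 := ⟨r - 1, by omega⟩
  have hstep : (1/2 + b (y + 1)) * (ψ (y + 1 + 1) - ψ y) = ψ (y + 1) - ψ y := by
    have := heq (y + 1) h1 h2
    rw [Nat.add_sub_cancel] at this
    linear_combination -this
  rw [prod_Icc_one_eq_mul_prod_Icc _ h2, prod_Icc_succ_top (by omega), Nat.add_sub_cancel]
  linear_combination (∏ j ∈ Icc 1 y, (1/2 + b j)) * (∏ j ∈ Icc (y + 1 + 1) L, (1/2 + b j)) * hstep
    + (∏ j ∈ Icc (y + 1 + 1) L, (1/2 + b j)) * prod_Icc_mul_succ_sub_eq b ψ L heq y (by omega)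

end RandomWalk

theorem stmt_3_general (L : ℕ) (b : ℕ → ℝ)
    (hb : ∀ x, 1 ≤ x → x ≤ L → |b x| < 1/2)
    (ψ : ℕ → ℝ)
    (heq : ∀ x, 1 ≤ x → x ≤ L →
      ψ x - (1/2) * (ψ (x+1) + ψ (x-1)) - b x * (ψ (x+1) - ψ (x-1)) = 0)
    (hbc0 : ψ 0 = - ψ 1) (hbcL : ψ (L+1) = 1 - ψ L) :
    2 * ψ 1 = (∏ k ∈ Icc 1 L, (1/2 + b k)) /
      (∑ r ∈ Icc 1 L, (∏ j ∈ Icc 1 (r-1), (1/2 - b j)) * (∏ j ∈ Icc (r+1) L, (1/2 + b j))) := by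
  have hP : ∏ k ∈ Icc 1 L, (1/2 + b k) ≠ 0 := prod_ne_zero_iff.mpr fun k hk => by
    obtain ⟨h1, h2⟩ := mem_Icc.mp hk
    linarith [(abs_lt.mp (hb k h1 h2)).1]
  have htele : ∑ r ∈ Icc 1 L, (ψ (r + 1) - ψ (r - 1)) = 1 := by
    rw [sum_Icc_one_succ_sub_pred, hbcL, hbc0]
    ring
  have hmul : 2 * ψ 1 * ∑ r ∈ Icc 1 L,
      (∏ j ∈ Icc 1 (r-1), (1/2 - b j)) * (∏ j ∈ Icc (r+1) L, (1/2 + b j))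
        = ∏ k ∈ Icc 1 L, (1/2 + b k) := by
    rw [show 2 * ψ 1 = ψ 1 - ψ 0 by rw [hbc0]; ring, mul_sum,
      ← sum_congr rfl (prod_Icc_mul_succ_sub_pred_eq b ψ L heq), ← mul_sum, htele, mul_one]
  exact eq_div_of_mul_eq (right_ne_zero_of_mul (hmul ▸ hP)) hmul

theorem stmt_3 (L : ℕ) (hL : 1 ≤ L) (b : ℕ → ℝ)
    (hb : ∀ x, 1 ≤ x → x ≤ L → |b x| < 1/2)
    (ψ : ℕ → ℝ)
    (heq : ∀ x, 1 ≤ x → x ≤ L →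
      ψ x - (1/2) * (ψ (x+1) + ψ (x-1)) - b x * (ψ (x+1) - ψ (x-1)) = 0)
    (hbc0 : ψ 0 = - ψ 1) (hbcL : ψ (L+1) = 1 - ψ L) :
    2 * ψ 1 = (∏ k ∈ Icc 1 L, (1/2 + b k)) /
      (∑ r ∈ Icc 1 L, (∏ j ∈ Icc 1 (r-1), (1/2 - b j)) * (∏ j ∈ Icc (r+1) L, (1/2 + b j))) :=
  stmt_3_general L b hb ψ heq hbc0 hbcL
end

section
/- Let A be a finite abelian group, Δ a self-adjoint negative-semidefinite operator on ℝ^A (e.g. the discrete Laplacian), and V : A → ℝ with |V(y)| < 2 for all y. For f : A → ℝ let w₊, w₋ solve [−Δ + 2 + V]w₊ = f and [−Δ + 2 − V]w₋ = f. Then ⟨w₊ w₋⟩ ≥ 0, where ⟨·⟩ denotes the average over A. -/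
/-!
With `H± = -Δ + 2 ± V`, the operator `H₋` is invertible because `-Δ ≥ 0` and `2 - V > 0`;
write `w₊ = H₋ u`. Symmetry of `H±` moves the operators across the pairing:
`⟨w₊ w₋⟩ = ⟨u f⟩ = ⟨H₊u · H₋u⟩ = ⟨((2 - Δ)u)² - V²u²⟩`, and expanding the square with
`⟨u Δu⟩ ≤ 0` bounds this below by `⟨(4 - V²) u²⟩ ≥ 0`.
-/

section Symmetric

variable {ι R : Type*} [Fintype ι] [CommSemiring R]

theorem dotProduct_eq_of_symm (P Q : (ι → R) → ι → R)
    (hP : ∀ f g, f ⬝ᵥ P g = g ⬝ᵥ P f) (hQ : ∀ f g, f ⬝ᵥ Q g = g ⬝ᵥ Q f)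
    {f p m u : ι → R} (hp : P p = f) (hm : Q m = f) (hu : Q u = p) :
    p ⬝ᵥ m = P u ⬝ᵥ Q u := by
  calc p ⬝ᵥ m = u ⬝ᵥ Q m := by rw [← hu, dotProduct_comm, hQ]
    _ = u ⬝ᵥ P p := by rw [hm, hp]
    _ = P u ⬝ᵥ Q u := by rw [hP, dotProduct_comm, hu]

end Symmetric

section Schrodinger

variable {ι : Type*}

def schrodingerOp (Δ : (ι → ℝ) →ₗ[ℝ] (ι → ℝ)) (c : ℝ) (V : ι → ℝ) :
    (ι → ℝ) →ₗ[ℝ] (ι → ℝ) :=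
  c • LinearMap.id + LinearMap.mulLeft ℝ V - Δ

namespace schrodingerOp

variable (Δ : (ι → ℝ) →ₗ[ℝ] (ι → ℝ)) (c : ℝ) (V : ι → ℝ)

@[simp]
theorem apply (g : ι → ℝ) (y : ι) :
    schrodingerOp Δ c V g y = (c + V y) * g y - Δ g y := by
  simp [schrodingerOp]; ring

variable [Fintype ι]

theorem dotProduct_self (g : ι → ℝ) :
    g ⬝ᵥ schrodingerOp Δ c V g = ∑ y, (c + V y) * g y ^ 2 - g ⬝ᵥ Δ g := by
  simp only [dotProduct, apply, ← Finset.sum_sub_distrib]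
  exact Finset.sum_congr rfl fun y _ => by ring

variable {Δ}

theorem dotProduct_apply_comm (hsym : ∀ f g : ι → ℝ, f ⬝ᵥ Δ g = g ⬝ᵥ Δ f) (f g : ι → ℝ) :
    f ⬝ᵥ schrodingerOp Δ c V g = g ⬝ᵥ schrodingerOp Δ c V f := by
  have hpot : ∑ y, f y * ((c + V y) * g y) = ∑ y, g y * ((c + V y) * f y) :=
    Finset.sum_congr rfl fun y _ => by ring
  simp only [dotProduct, apply, mul_sub, Finset.sum_sub_distrib] at hsym ⊢
  rw [hpot, hsym]

variable {c V}

theorem injective (hneg : ∀ f : ι → ℝ, f ⬝ᵥ Δ f ≤ 0) (hpos : ∀ y, 0 < c + V y) :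
    Function.Injective (schrodingerOp Δ c V) := by
  rw [← LinearMap.ker_eq_bot, LinearMap.ker_eq_bot']
  intro g hg
  have hterm : ∀ y ∈ Finset.univ, 0 ≤ (c + V y) * g y ^ 2 :=
    fun y _ => mul_nonneg (hpos y).le (sq_nonneg _)
  have hsum : ∑ y, (c + V y) * g y ^ 2 = 0 := by
    refine le_antisymm ?_ (Finset.sum_nonneg hterm)
    have := dotProduct_self Δ c V g
    rw [hg, dotProduct_zero] at this
    linarith [hneg g]
  funext y
  have := (Finset.sum_eq_zero_iff_of_nonneg hterm).mp hsum y (Finset.mem_univ y)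
  simpa [(hpos y).ne'] using this

theorem apply_dotProduct_apply_neg_nonneg (hneg : ∀ f : ι → ℝ, f ⬝ᵥ Δ f ≤ 0)
    (hc : 0 ≤ c) (hV : ∀ y, |V y| ≤ c) (u : ι → ℝ) :
    0 ≤ schrodingerOp Δ c V u ⬝ᵥ schrodingerOp Δ c (-V) u := by
  have hexpand : schrodingerOp Δ c V u ⬝ᵥ schrodingerOp Δ c (-V) u
      = ∑ y, ((Δ u y) ^ 2 + (c ^ 2 - V y ^ 2) * u y ^ 2) - 2 * c * (u ⬝ᵥ Δ u) := by
    simp only [dotProduct, apply, Pi.neg_apply, Finset.mul_sum, ← Finset.sum_sub_distrib]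
    exact Finset.sum_congr rfl fun y _ => by ring
  have hterm : ∀ y, 0 ≤ (Δ u y) ^ 2 + (c ^ 2 - V y ^ 2) * u y ^ 2 := fun y =>
    have hVc : V y ^ 2 ≤ c ^ 2 := sq_le_sq.mpr ((hV y).trans (le_abs_self c))
    add_nonneg (sq_nonneg _) (mul_nonneg (sub_nonneg.mpr hVc) (sq_nonneg _))
  rw [hexpand]
  nlinarith [Finset.sum_nonneg fun y (_ : y ∈ Finset.univ) => hterm y, hneg u]

end schrodingerOp

end Schrodinger

theorem stmt_8_general (A : Type*) [Fintype A]
    (Δ : (A → ℝ) →ₗ[ℝ] (A → ℝ))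
    (hsym : ∀ f g : A → ℝ, ∑ x, f x * Δ g x = ∑ x, g x * Δ f x)
    (hneg : ∀ f : A → ℝ, ∑ x, f x * Δ f x ≤ 0)
    (V : A → ℝ) (hV : ∀ y, |V y| < 2)
    (f wp wm : A → ℝ)
    (hwp : ∀ y, -(Δ wp) y + (2 + V y) * wp y = f y)
    (hwm : ∀ y, -(Δ wm) y + (2 - V y) * wm y = f y) :
    (∑ y, wp y * wm y) / (Fintype.card A : ℝ) ≥ 0 := by
  have hpos : ∀ y, 0 < 2 + -V y := fun y => by linarith [(abs_lt.mp (hV y)).2]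
  obtain ⟨u, hu⟩ := (LinearMap.injective_iff_surjective.mp
    (schrodingerOp.injective hneg hpos)) wp
  have hp : schrodingerOp Δ 2 V wp = f := funext fun y => by simp [← hwp y]; ring
  have hm : schrodingerOp Δ 2 (-V) wm = f := funext fun y => by simp [← hwm y]; ring
  have hpair : wp ⬝ᵥ wm = schrodingerOp Δ 2 V u ⬝ᵥ schrodingerOp Δ 2 (-V) u :=
    dotProduct_eq_of_symm _ _ (schrodingerOp.dotProduct_apply_comm 2 V hsym)
      (schrodingerOp.dotProduct_apply_comm 2 (-V) hsym) hp hm hu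
  have hnonneg : 0 ≤ wp ⬝ᵥ wm := hpair ▸
    schrodingerOp.apply_dotProduct_apply_neg_nonneg hneg zero_le_two (fun y => (hV y).le) u
  exact div_nonneg hnonneg (Nat.cast_nonneg _)

theorem stmt_8 (A : Type*) [AddCommGroup A] [Fintype A]
    (Δ : (A → ℝ) →ₗ[ℝ] (A → ℝ))
    (hsym : ∀ f g : A → ℝ, ∑ x, f x * Δ g x = ∑ x, g x * Δ f x)
    (hneg : ∀ f : A → ℝ, ∑ x, f x * Δ f x ≤ 0)
    (V : A → ℝ) (hV : ∀ y, |V y| < 2)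
    (f wp wm : A → ℝ)
    (hwp : ∀ y, -(Δ wp) y + (2 + V y) * wp y = f y)
    (hwm : ∀ y, -(Δ wm) y + (2 - V y) * wm y = f y) :
    (∑ y, wp y * wm y) / (Fintype.card A : ℝ) ≥ 0 :=
  stmt_8_general A Δ hsym hneg V hV f wp wm hwp hwm
end

section
/- Let A be a finite abelian group with discrete Laplacian Δ and let V : A → ℝ satisfy 0 < |V(y)| < 2. For Φ : A → ℝ set w₊ = (−Δ+2)Φ/V − Φ and w₋ = (−Δ+2)Φ/V + Φ. Then ⟨w₋ w₊ (4 + V²)⟩ ≥ ⟨Φ²(4 − V²)⟩ ≥ 0, where ⟨·⟩ is the uniform average over A. -/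
theorem stmt_10 (A : Type*) [AddCommGroup A] [Fintype A]
    (Δ : (A → ℝ) →ₗ[ℝ] (A → ℝ))
    (hsym : ∀ f g : A → ℝ, ∑ x, f x * Δ g x = ∑ x, g x * Δ f x)
    (hneg : ∀ f : A → ℝ, ∑ x, f x * Δ f x ≤ 0)
    (V : A → ℝ) (hV : ∀ y, 0 < |V y| ∧ |V y| < 2)
    (Φ : A → ℝ) :
    let wp : A → ℝ := fun y => (-(Δ Φ) y + 2 * Φ y) / V y - Φ y
    let wm : A → ℝ := fun y => (-(Δ Φ) y + 2 * Φ y) / V y + Φ y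
    (∑ y, wm y * wp y * (4 + V y ^ 2)) / (Fintype.card A : ℝ) ≥
      (∑ y, Φ y ^ 2 * (4 - V y ^ 2)) / (Fintype.card A : ℝ) ∧
    (∑ y, Φ y ^ 2 * (4 - V y ^ 2)) / (Fintype.card A : ℝ) ≥ 0 := by
  intro wp wm
  have hcard : (0 : ℝ) ≤ (Fintype.card A : ℝ) := Nat.cast_nonneg _
  set u : A → ℝ := fun y => -(Δ Φ) y + 2 * Φ y with hu
  -- Step A : ∑ u² ≥ 4 ∑ Φ²
  have hA : 4 * ∑ y, Φ y ^ 2 ≤ ∑ y, u y ^ 2 := by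
    have h1 : ∑ y, u y ^ 2 =
        ∑ y, (Δ Φ y) ^ 2 - 4 * ∑ y, Φ y * Δ Φ y + 4 * ∑ y, Φ y ^ 2 := by
      have : ∑ y, u y ^ 2 = ∑ y, ((Δ Φ y) ^ 2 - 4 * (Φ y * Δ Φ y) + 4 * Φ y ^ 2) :=
        Finset.sum_congr rfl fun y _ => by simp only [hu]; ring
      rw [this, Finset.sum_add_distrib, Finset.sum_sub_distrib,
        ← Finset.mul_sum, ← Finset.mul_sum]
    have h2 : (0:ℝ) ≤ ∑ y, (Δ Φ y) ^ 2 := Finset.sum_nonneg fun y _ => sq_nonneg _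
    have h3 := hneg Φ
    nlinarith
  -- Step B : pointwise bound
  have hB : ∀ y, 2 * u y ^ 2 - Φ y ^ 2 * (4 + V y ^ 2) ≤ wm y * wp y * (4 + V y ^ 2) := by
    intro y
    obtain ⟨h0, h2⟩ := hV y
    have hne : V y ≠ 0 := fun h => by simp [h] at h0
    have hVsq : V y ^ 2 < 4 := by nlinarith [abs_nonneg (V y), sq_abs (V y)]
    have hVpos : 0 < V y ^ 2 := by positivity
    have hwmwp : wm y * wp y = (u y / V y) ^ 2 - Φ y ^ 2 := by
      simp only [wp, wm, hu]; ring
    rw [hwmwp, div_pow, div_sub' (by positivity : V y ^ 2 ≠ 0),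
      div_mul_eq_mul_div, le_div_iff₀ hVpos]
    nlinarith [mul_nonneg (sq_nonneg (u y)) (by linarith : (0:ℝ) ≤ 4 - V y ^ 2)]
  -- combine sums
  have hsum : ∑ y, Φ y ^ 2 * (4 - V y ^ 2) ≤ ∑ y, wm y * wp y * (4 + V y ^ 2) := by
    have h5 : ∑ y, (2 * u y ^ 2 - Φ y ^ 2 * (4 + V y ^ 2)) ≤
        ∑ y, wm y * wp y * (4 + V y ^ 2) :=
      Finset.sum_le_sum fun y _ => hB y
    have h6 : ∑ y, (2 * u y ^ 2 - Φ y ^ 2 * (4 + V y ^ 2)) =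
        2 * ∑ y, u y ^ 2 - ∑ y, Φ y ^ 2 * (4 + V y ^ 2) := by
      rw [Finset.sum_sub_distrib, Finset.mul_sum]
    have h7 : ∑ y, Φ y ^ 2 * (4 - V y ^ 2) =
        8 * ∑ y, Φ y ^ 2 - ∑ y, Φ y ^ 2 * (4 + V y ^ 2) := by
      rw [Finset.mul_sum, ← Finset.sum_sub_distrib]
      apply Finset.sum_congr rfl
      intro y _; ring
    rw [h7]
    rw [h6] at h5
    linarith
  have hnn : (0:ℝ) ≤ ∑ y, Φ y ^ 2 * (4 - V y ^ 2) := by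
    apply Finset.sum_nonneg
    intro y _
    obtain ⟨h0, h2⟩ := hV y
    have : V y ^ 2 < 4 := by nlinarith [abs_nonneg (V y), sq_abs (V y)]
    nlinarith [sq_nonneg (Φ y)]
  constructor
  · exact div_le_div_of_nonneg_right hsum hcard
  · positivity
end

section
/- Let (Ω_{d−1}, ⟨·⟩) be a finite torus of integer points with discrete Laplacian Δ, and V : Ω_{d−1} → ℝ with 0 < |V| < 2, in dimension d = 2 (so Δ is the 1-dimensional discrete Laplacian). For Φ : Ω₁ → ℝ let w₊ = (−Δ+2)Φ/V − Φ, w₋ = (−Δ+2)Φ/V + Φ. Then 2⟨w₋w₊(4+V²)⟩ + ⟨V w₊ Δw₋⟩ − ⟨V w₋ Δw₊⟩ − (1/2)⟨(2−|V|)²(w₋² + w₊²)⟩ ≥ 0. -/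
/-!
Put `u = (-Δ + 2)Φ / V`, so that `w₋ = u + Φ` and `w₊ = u - Φ`. Using `(2 - |V|)² ≤ 4 - V²` and
the Schwarz bound `|V(y) Φ(y) u(y ± 1)| ≤ Φ(y)² + u(y ± 1)²` (valid as `|V| ≤ 2`), the summand
of the form is bounded below pointwise by
`(ΔΦ)² - 12 Φ ΔΦ + 4u(y)² - 2u(y+1)² - 2u(y-1)²`.
On the torus the `u`-terms cancel by translation invariance, and summation by parts turns
`-12 ∑ Φ ΔΦ` into `12 ∑ (∇Φ)²`, so the sum of the lower bound is a sum of squares.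
-/

open Finset

lemma sq_two_sub_abs_le {v : ℝ} (hv : |v| ≤ 2) : (2 - |v|) ^ 2 ≤ 4 - v ^ 2 := by
  nlinarith [sq_abs v, abs_nonneg v]

lemma mul_mul_le_sq_add_sq_of_abs_le_two {v a b : ℝ} (hv : |v| ≤ 2) : v * a * b ≤ a ^ 2 + b ^ 2 := by
  have : v * a * b ≤ |v| * |a| * |b| := by
    rw [← abs_mul, ← abs_mul]; exact le_abs_self _
  nlinarith [sq_nonneg (|a| - |b|), sq_abs a, sq_abs b, mul_nonneg (abs_nonneg a) (abs_nonneg b)]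

section DiscreteLaplacian

variable {G : Type*} [AddGroup G] (e : G)

def discreteLaplacian (f : G → ℝ) (x : G) : ℝ := f (x + e) + f (x - e) - 2 * f x

-- The summand of the paper's form `Q_V` for `U = V/4`, with `wm = w₋` and `wp = w₊`.
noncomputable def quadFormDensity (V wm wp : G → ℝ) (y : G) : ℝ :=
  2 * (wm y * wp y * (4 + V y ^ 2)) + V y * wp y * discreteLaplacian e wm y
    - V y * wm y * discreteLaplacian e wp y - 1 / 2 * ((2 - |V y|) ^ 2 * (wm y ^ 2 + wp y ^ 2))

lemma le_quadFormDensity {V Φ u : G → ℝ} {y : G} (hV : |V y| ≤ 2)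
    (hu : V y * u y = -discreteLaplacian e Φ y + 2 * Φ y) :
    discreteLaplacian e Φ y ^ 2 - 12 * Φ y * discreteLaplacian e Φ y
        + 4 * u y ^ 2 - 2 * u (y + e) ^ 2 - 2 * u (y - e) ^ 2
      ≤ quadFormDensity e V (u + Φ) (u - Φ) y := by
  have hsq := sq_two_sub_abs_le hV
  have hplus := mul_mul_le_sq_add_sq_of_abs_le_two (a := Φ y) (b := u (y + e)) hV
  have hminus := mul_mul_le_sq_add_sq_of_abs_le_two (a := Φ y) (b := u (y - e)) hV
  have hΦ : 0 ≤ (4 - V y ^ 2) * Φ y ^ 2 :=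
    mul_nonneg ((sq_nonneg _).trans hsq) (sq_nonneg _)
  simp only [quadFormDensity, discreteLaplacian, Pi.add_apply, Pi.sub_apply] at hu ⊢
  linear_combination (u y ^ 2 + Φ y ^ 2) * hsq + 2 * hplus + 2 * hminus + hΦ
    - (3 * (V y * u y) + 12 * Φ y - Φ (y + e) - Φ (y - e)) * hu

variable [Fintype G]

lemma sum_mul_discreteLaplacian (f : G → ℝ) :
    ∑ x, f x * discreteLaplacian e f x = -∑ x, (f (x + e) - f x) ^ 2 := by
  have shift_sq : ∑ x, f (x + e) ^ 2 = ∑ x, f x ^ 2 :=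
    Equiv.sum_comp (Equiv.addRight e) (fun x => f x ^ 2)
  have shift_mul : ∑ x, f x * f (x - e) = ∑ x, f (x + e) * f x := by
    simpa using (Equiv.sum_comp (Equiv.addRight e) (fun x => f x * f (x - e))).symm
  have telescope : ∀ x, f x * discreteLaplacian e f x + (f (x + e) - f x) ^ 2
      = (f (x + e) ^ 2 - f x ^ 2) + (f x * f (x - e) - f (x + e) * f x) := by
    intro x; simp only [discreteLaplacian]; ring
  rw [eq_neg_iff_add_eq_zero, ← sum_add_distrib]
  simp only [telescope, sum_add_distrib, sum_sub_distrib, shift_sq, shift_mul, sub_self, add_zero]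

lemma sum_quadFormDensity_nonneg {V Φ u : G → ℝ} (hV : ∀ y, |V y| ≤ 2)
    (hu : ∀ y, V y * u y = -discreteLaplacian e Φ y + 2 * Φ y) :
    0 ≤ ∑ y, quadFormDensity e V (u + Φ) (u - Φ) y := by
  have shift_add : ∑ y, u (y + e) ^ 2 = ∑ y, u y ^ 2 :=
    Equiv.sum_comp (Equiv.addRight e) (fun y => u y ^ 2)
  have shift_sub : ∑ y, u (y - e) ^ 2 = ∑ y, u y ^ 2 :=
    Equiv.sum_comp (Equiv.subRight e) (fun y => u y ^ 2)
  calc 0 ≤ ∑ y, (discreteLaplacian e Φ y ^ 2 + 12 * (Φ (y + e) - Φ y) ^ 2) := by positivity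
    _ = ∑ y, (discreteLaplacian e Φ y ^ 2 - 12 * Φ y * discreteLaplacian e Φ y
          + 4 * u y ^ 2 - 2 * u (y + e) ^ 2 - 2 * u (y - e) ^ 2) := by
      simp only [sum_add_distrib, sum_sub_distrib, ← mul_sum, mul_assoc, shift_add, shift_sub,
        sum_mul_discreteLaplacian]
      ring
    _ ≤ _ := sum_le_sum fun y _ => le_quadFormDensity e (hV y) (hu y)

end DiscreteLaplacian

theorem stmt_11 (n : ℕ) [NeZero n] (V Φ : ZMod n → ℝ)
    (hV : ∀ y, 0 < |V y| ∧ |V y| < 2) :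
    let lap : (ZMod n → ℝ) → ZMod n → ℝ := fun f x => f (x+1) + f (x-1) - 2 * f x
    let wp : ZMod n → ℝ := fun y => (-(lap Φ) y + 2 * Φ y) / V y - Φ y
    let wm : ZMod n → ℝ := fun y => (-(lap Φ) y + 2 * Φ y) / V y + Φ y
    let avg : (ZMod n → ℝ) → ℝ := fun h => (∑ y, h y) / (n : ℝ)
    2 * avg (fun y => wm y * wp y * (4 + V y ^ 2))
      + avg (fun y => V y * wp y * lap wm y)
      - avg (fun y => V y * wm y * lap wp y)
      - (1/2) * avg (fun y => (2 - |V y|) ^ 2 * (wm y ^ 2 + wp y ^ 2)) ≥ 0 := by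
  intro lap wp wm avg
  set u : ZMod n → ℝ := fun y => (-discreteLaplacian 1 Φ y + 2 * Φ y) / V y
  have hu : ∀ y, V y * u y = -discreteLaplacian 1 Φ y + 2 * Φ y := fun y =>
    mul_div_cancel₀ _ (abs_pos.mp (hV y).1)
  have key : 0 ≤ ∑ y, quadFormDensity 1 V wm wp y :=
    sum_quadFormDensity_nonneg 1 (fun y => (hV y).2.le) hu
  have expand : 2 * avg (fun y => wm y * wp y * (4 + V y ^ 2))
      + avg (fun y => V y * wp y * lap wm y) - avg (fun y => V y * wm y * lap wp y)
      - (1/2) * avg (fun y => (2 - |V y|) ^ 2 * (wm y ^ 2 + wp y ^ 2))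
      = (∑ y, quadFormDensity 1 V wm wp y) / n := by
    simp only [avg, quadFormDensity, show lap = discreteLaplacian 1 from rfl, sum_add_distrib,
      sum_sub_distrib, ← mul_sum]
    ring
  rw [ge_iff_le, expand]
  positivity
end
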